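/- arXiv:2506.05697 — 4 statements merged into one kernel-verified Lean document; each statement's English description precedes it below -/
import Mathlib

section
/- Let I_{m-1} be the ideal of Q[C_{-1},...,C_{-(m+1)}] generated by E_1,...,E_{m-1}, where E_k = (C^3)_{-k}. There exist unique homogeneous polynomials R_k ∈ Q[C_{-1},C_{-2}] of weight k+3 (with weights w(C_{-1})=2, w(C_{-2})=3) such that the polynomials Ẽ_k = C_{-(k+2)} + R_k(C_{-1},C_{-2}), k = 1,...,m-1, generate the same ideal I_{m-1}. -/
/-!
Over `ℚ`, `Eₖ = 3 C₋₍ₖ₊₂₎ + (a polynomial in C₋₁, …, C₋₍ₖ₊₁₎)`, so `E₁ = E₂ = ⋯ = 0` can be solved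
recursively for `C₋₃, C₋₄, …` as polynomials `ρₙ` in `C₋₁, C₋₂`, weighted homogeneous because the
`Eₖ` are. The substitution `C₋ₙ ↦ ρₙ` kills every `Eₖ`, and `p - p(ρ)` lies in the ideal generated
by the `C₋ₙ - ρₙ` for the variables `C₋ₙ` occurring in `p`; together with the triangular shape of
the `Eₖ` this gives `⟨E₁, …, E_{m-1}⟩ = ⟨C₋₃ - ρ₃, …, C₋₍ₘ₊₁₎ - ρₘ₊₁⟩`, so `Rₖ = -ρₖ₊₂` works.
It is the only choice: if `⟨Xₑ₍ᵢ₎ + Rᵢ⟩ = ⟨Xₑ₍ᵢ₎ + R'ᵢ⟩` with no `Rᵢ, R'ᵢ` involving any `Xₑ₍ⱼ₎`,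
the substitution `Xₑ₍ᵢ₎ ↦ -R'ᵢ` kills the right-hand ideal and sends `Xₑ₍ᵢ₎ + Rᵢ` to `Rᵢ - R'ᵢ`.
-/

/-- The generic Laurent series `C = x + ∑_{i≥1} C₋ᵢ x⁻ⁱ` with indeterminate
coefficients `C₋ᵢ = X i`, modelled in the variable `u = x⁻¹`. -/
noncomputable def genC : LaurentSeries (MvPolynomial ℕ ℚ) :=
  HahnSeries.single (-1 : ℤ) 1 +
    HahnSeries.ofPowerSeries ℤ (MvPolynomial ℕ ℚ)
      (PowerSeries.mk fun i => if i = 0 then 0 else MvPolynomial.X i)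

open MvPolynomial

namespace MvPolynomial

variable {R σ : Type*}

theorem aeval_eq_self_of_mem_supported [CommSemiring R] {f : σ → MvPolynomial σ R} {S : Set σ}
    (hf : ∀ n ∈ S, f n = X n) {p : MvPolynomial σ R} (hp : p ∈ supported R S) :
    aeval f p = p := by
  conv_rhs => rw [← aeval_X_left_apply p]
  exact eval₂Hom_congr' rfl (fun n hn _ => hf n (mem_supported.mp hp hn)) rfl

theorem sub_aeval_mem_span_of_mem_supported [CommRing R] (f : σ → MvPolynomial σ R) {S : Set σ}
    {p : MvPolynomial σ R} (hp : p ∈ supported R S) :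
    p - aeval f p ∈ Ideal.span ((fun n => X n - f n) '' S) := by
  set J := Ideal.span ((fun n => X n - f n) '' S)
  refine Ideal.Quotient.eq.mp ?_
  rw [supported_eq_range_rename] at hp
  obtain ⟨q, rfl⟩ := hp
  have h : (Ideal.Quotient.mkₐ R J).comp (rename ((↑) : S → σ)) =
      ((Ideal.Quotient.mkₐ R J).comp (aeval f)).comp (rename (↑)) := by
    ext n
    have hn : X (n : σ) - f n ∈ J := Ideal.subset_span ⟨n, n.2, rfl⟩
    simpa using Ideal.Quotient.eq.mpr hn
  exact congr($h q)

theorem eq_of_span_range_X_add_eq_span [CommRing R] {ι : Type*} {e : ι → σ} (he : e.Injective)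
    {S : Set σ} (hS : ∀ i, e i ∉ S) {R₁ R₂ : ι → MvPolynomial σ R}
    (h₁ : ∀ i, R₁ i ∈ supported R S) (h₂ : ∀ i, R₂ i ∈ supported R S)
    (h : Ideal.span (Set.range fun i => X (e i) + R₁ i) =
      Ideal.span (Set.range fun i => X (e i) + R₂ i)) :
    R₁ = R₂ := by
  set f : σ → MvPolynomial σ R := Function.extend e (fun i => -R₂ i) X
  have hfS : ∀ n ∈ S, f n = X n := fun n hn =>
    Function.extend_apply' _ _ _ (by rintro ⟨i, rfl⟩; exact hS i hn)
  have hfe : ∀ i, f (e i) = -R₂ i := he.extend_apply _ _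
  have hker : Ideal.span (Set.range fun i => X (e i) + R₂ i) ≤ RingHom.ker (aeval (R := R) f) := by
    refine Ideal.span_le.mpr ?_
    rintro _ ⟨i, rfl⟩
    rw [SetLike.mem_coe, RingHom.mem_ker, map_add, aeval_X, hfe,
      aeval_eq_self_of_mem_supported hfS (h₂ i), neg_add_cancel]
  funext i
  have hi := hker (h ▸ Ideal.subset_span (Set.mem_range_self i))
  rw [RingHom.mem_ker, map_add, aeval_X, hfe, aeval_eq_self_of_mem_supported hfS (h₁ i)] at hi
  linear_combination hi

end MvPolynomial

namespace PowerSeries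

open Finset.HasAntidiagonal

variable {A : Type*} [CommSemiring A]

theorem coeff_coe_trunc_pow_of_lt {n N : ℕ} (h : n < N) (φ : A⟦X⟧) (a : ℕ) :
    coeff n ((trunc N φ : A⟦X⟧) ^ a) = coeff n (φ ^ a) := by
  have := congrArg (Polynomial.coeff · n) (trunc_trunc_pow φ N a)
  rwa [coeff_trunc, coeff_trunc, if_pos h, if_pos h] at this

theorem coeff_pow_mem_of_coeff_mem {S : Type*} [SetLike S A] [SubsemiringClass S A] (s : S)
    {φ : A⟦X⟧} {n : ℕ} (h : ∀ j ≤ n, coeff j φ ∈ s) (e : ℕ) : coeff n (φ ^ e) ∈ s := by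
  induction e generalizing n with
  | zero => rw [pow_zero, coeff_one]; split_ifs <;> simp
  | succ e ih =>
    rw [pow_succ, coeff_mul]
    exact sum_mem fun x hx =>
      mul_mem (ih fun j hj => h j (hj.trans (antidiagonal.fst_le hx))) (h _ (antidiagonal.snd_le hx))

theorem isWeightedHomogeneous_coeff_pow {R σ : Type*} [CommSemiring R] {w : σ → ℕ} {d : ℕ}
    {φ : (MvPolynomial σ R)⟦X⟧} (h : ∀ j, (coeff j φ).IsWeightedHomogeneous w (j + d)) (e n : ℕ) :
    (coeff n (φ ^ e)).IsWeightedHomogeneous w (n + e * d) := by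
  induction e generalizing n with
  | zero =>
    rw [pow_zero, coeff_one]
    split_ifs with hn
    · subst hn; simpa using isWeightedHomogeneous_one R w
    · exact isWeightedHomogeneous_zero _ w _
  | succ e ih =>
    rw [pow_succ, coeff_mul]
    refine IsWeightedHomogeneous.sum _ _ _ fun x hx => ?_
    rw [mem_antidiagonal] at hx
    convert (ih x.1).mul (h x.2) using 1
    rw [← hx]; ring

end PowerSeries

section CubeCoefficients

variable {A : Type*} [CommSemiring A]

noncomputable def cubeLower (φ : PowerSeries A) (k : ℕ) : A :=
  3 * PowerSeries.coeff (k + 2) (φ ^ 2) + PowerSeries.coeff (k + 1) (φ ^ 3)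

theorem cubeLower_coe_trunc {k N : ℕ} (h : k + 3 ≤ N) (φ : PowerSeries A) :
    cubeLower (PowerSeries.trunc N φ : PowerSeries A) k = cubeLower φ k := by
  simp only [cubeLower, PowerSeries.coeff_coe_trunc_pow_of_lt (by omega : k + 2 < N),
    PowerSeries.coeff_coe_trunc_pow_of_lt (by omega : k + 1 < N)]

theorem map_cubeLower {B : Type*} [CommSemiring B] (f : A →+* B) (φ : PowerSeries A) (k : ℕ) :
    f (cubeLower φ k) = cubeLower (PowerSeries.map f φ) k := by
  simp [cubeLower, ← map_pow, PowerSeries.coeff_map, map_ofNat]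

theorem cubeLower_mem {S : Type*} [SetLike S A] [SubsemiringClass S A] (s : S) {φ : PowerSeries A}
    {k : ℕ} (h : ∀ j ≤ k + 2, PowerSeries.coeff j φ ∈ s) : cubeLower φ k ∈ s :=
  add_mem (mul_mem (ofNat_mem s 3) (PowerSeries.coeff_pow_mem_of_coeff_mem s h 2))
    (PowerSeries.coeff_pow_mem_of_coeff_mem s (fun j hj => h j (by omega)) 3)

theorem isWeightedHomogeneous_cubeLower {R σ : Type*} [CommSemiring R] {w : σ → ℕ}
    {φ : PowerSeries (MvPolynomial σ R)}
    (h : ∀ j, (PowerSeries.coeff j φ).IsWeightedHomogeneous w (j + 1)) (k : ℕ) :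
    (cubeLower φ k).IsWeightedHomogeneous w (k + 4) := by
  have h2 := PowerSeries.isWeightedHomogeneous_coeff_pow h 2 (k + 2)
  have h3 := PowerSeries.isWeightedHomogeneous_coeff_pow h 3 (k + 1)
  have h2' := h2.C_mul (3 : R)
  simp only [map_ofNat] at h2'
  exact h2'.add h3

theorem coeff_single_add_ofPowerSeries_pow_three (φ : PowerSeries A) (k : ℕ) :
    ((HahnSeries.single (-1 : ℤ) (1 : A) + HahnSeries.ofPowerSeries ℤ A φ) ^ 3).coeff
      ((k : ℤ) + 1) =
      3 * PowerSeries.coeff (k + 3) φ + cubeLower φ k := by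
  have hfac : HahnSeries.single (-1 : ℤ) (1 : A) + HahnSeries.ofPowerSeries ℤ A φ =
      HahnSeries.single (-1 : ℤ) 1 * HahnSeries.ofPowerSeries ℤ A (1 + PowerSeries.X * φ) := by
    rw [map_add, map_mul, map_one (HahnSeries.ofPowerSeries ℤ A), HahnSeries.ofPowerSeries_X,
      mul_add, mul_one, ← mul_assoc, HahnSeries.single_mul_single]
    simp
  have hexp : (1 + PowerSeries.X * φ) ^ 3 =
      1 + PowerSeries.X * (3 • φ + PowerSeries.X * (3 • φ ^ 2 + PowerSeries.X * φ ^ 3)) := by ring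
  rw [hfac, mul_pow, HahnSeries.single_pow, one_pow, ← map_pow (HahnSeries.ofPowerSeries ℤ A),
    show (k : ℤ) + 1 = ((k + 4 : ℕ) : ℤ) + (3 • (-1)) by push_cast; ring,
    HahnSeries.coeff_single_mul_add, one_mul, HahnSeries.ofPowerSeries_apply_coeff, hexp]
  simp only [map_add, map_nsmul, PowerSeries.coeff_succ_X_mul, PowerSeries.coeff_one]
  simp [cubeLower, nsmul_eq_mul]

end CubeCoefficients

noncomputable def genTail : PowerSeries (MvPolynomial ℕ ℚ) :=
  PowerSeries.mk fun i => if i = 0 then 0 else X i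

theorem coeff_genC_pow_three (k : ℕ) :
    (genC ^ 3).coeff ((k : ℤ) + 1) = 3 * X (k + 3) + cubeLower genTail k := by
  rw [show genC = HahnSeries.single (-1 : ℤ) 1 + HahnSeries.ofPowerSeries ℤ _ genTail from rfl,
    coeff_single_add_ofPowerSeries_pow_three]
  simp [genTail]

theorem coeff_genTail_mem_supported {j N : ℕ} (h : j ≤ N) :
    PowerSeries.coeff j genTail ∈ supported ℚ (Set.Icc 1 N) := by
  rw [genTail, PowerSeries.coeff_mk]
  split_ifs with hj
  · exact zero_mem _
  · exact X_mem_supported.mpr ⟨by omega, h⟩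

theorem coeff_genC_pow_three_mem_supported (k : ℕ) :
    (genC ^ 3).coeff ((k : ℤ) + 1) ∈ supported ℚ (Set.Icc 1 (k + 3)) := by
  rw [coeff_genC_pow_three]
  exact add_mem (mul_mem (ofNat_mem _ 3) (X_mem_supported.mpr ⟨by omega, le_rfl⟩))
    (cubeLower_mem _ fun j hj => coeff_genTail_mem_supported (by omega))

/-- `forcedCoeff n` is `ρₙ`; the cut-off `j < n + 3` only makes the recursion visibly
well-founded, see `forcedCoeff_add_three`. -/
noncomputable def forcedCoeff : ℕ → MvPolynomial ℕ ℚ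
  | 0 => 0
  | 1 => X 1
  | 2 => X 2
  | n + 3 =>
    C (-1 / 3) * cubeLower (PowerSeries.mk fun j => if _ : j < n + 3 then forcedCoeff j else 0) n

theorem forcedCoeff_mem_supported : ∀ n, forcedCoeff n ∈ supported ℚ ({1, 2} : Set ℕ)
  | 0 => by rw [forcedCoeff]; exact zero_mem _
  | 1 => by rw [forcedCoeff]; exact X_mem_supported.mpr (by simp)
  | 2 => by rw [forcedCoeff]; exact X_mem_supported.mpr (by simp)
  | n + 3 => by
    rw [forcedCoeff]
    refine mul_mem (Subalgebra.algebraMap_mem _ _) (cubeLower_mem _ fun j _ => ?_)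
    rw [PowerSeries.coeff_mk]
    split_ifs with hj
    exacts [forcedCoeff_mem_supported j, zero_mem _]

theorem isWeightedHomogeneous_forcedCoeff :
    ∀ n, (forcedCoeff n).IsWeightedHomogeneous (fun j : ℕ => j + 1) (n + 1)
  | 0 => by rw [forcedCoeff]; exact isWeightedHomogeneous_zero _ _ _
  | 1 => by rw [forcedCoeff]; exact isWeightedHomogeneous_X _ _ _
  | 2 => by rw [forcedCoeff]; exact isWeightedHomogeneous_X _ _ _
  | n + 3 => by
    rw [forcedCoeff]
    refine (isWeightedHomogeneous_cubeLower (fun j => ?_) n).C_mul _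
    rw [PowerSeries.coeff_mk]
    split_ifs with hj
    exacts [isWeightedHomogeneous_forcedCoeff j, isWeightedHomogeneous_zero _ _ _]

theorem forcedCoeff_add_three (n : ℕ) :
    forcedCoeff (n + 3) = C (-1 / 3) * cubeLower (PowerSeries.mk forcedCoeff) n := by
  rw [forcedCoeff, ← cubeLower_coe_trunc (le_refl (n + 3)) (PowerSeries.mk forcedCoeff)]
  congr 2
  ext j
  simp [PowerSeries.coeff_trunc]

theorem map_aeval_forcedCoeff_genTail :
    PowerSeries.map (aeval (R := ℚ) forcedCoeff : MvPolynomial ℕ ℚ →+* MvPolynomial ℕ ℚ) genTail =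
      PowerSeries.mk forcedCoeff := by
  refine PowerSeries.ext fun n => ?_
  rw [genTail, PowerSeries.coeff_map, PowerSeries.coeff_mk, PowerSeries.coeff_mk]
  split_ifs with hn
  · subst hn; rw [forcedCoeff, map_zero]
  · exact aeval_X (R := ℚ) forcedCoeff n

theorem aeval_forcedCoeff_cubeLower_genTail (k : ℕ) :
    aeval forcedCoeff (cubeLower genTail k) = -(3 * forcedCoeff (k + 3)) := by
  have h3 : (3 : MvPolynomial ℕ ℚ) * C (-1 / 3) = -1 := by
    rw [← map_ofNat C 3, ← C_mul, ← C_1, ← C_neg]; norm_num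
  rw [← AlgHom.coe_toRingHom, map_cubeLower, map_aeval_forcedCoeff_genTail, forcedCoeff_add_three,
    ← mul_assoc, h3]
  ring

theorem aeval_forcedCoeff_coeff_genC_pow_three (k : ℕ) :
    aeval forcedCoeff ((genC ^ 3).coeff ((k : ℤ) + 1)) = 0 := by
  rw [coeff_genC_pow_three, map_add, map_mul, aeval_forcedCoeff_cubeLower_genTail, aeval_X,
    map_ofNat]
  ring

theorem span_X_sub_forcedCoeff_Icc_le {I : Ideal (MvPolynomial ℕ ℚ)} {N : ℕ}
    (h : ∀ n, 3 ≤ n → n ≤ N → X n - forcedCoeff n ∈ I) :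
    Ideal.span ((fun n => X n - forcedCoeff n) '' Set.Icc 1 N) ≤ I := by
  refine Ideal.span_le.mpr ?_
  rintro _ ⟨n, ⟨hn1, hnN⟩, rfl⟩
  obtain rfl | rfl | hn3 : n = 1 ∨ n = 2 ∨ 3 ≤ n := by omega
  · simp [forcedCoeff]
  · simp [forcedCoeff]
  · exact h n hn3 hnN

noncomputable def cubeIdeal (m : ℕ) : Ideal (MvPolynomial ℕ ℚ) :=
  Ideal.span (Set.range fun i : Fin (m - 1) => (genC ^ 3).coeff (((i : ℕ) : ℤ) + 1))

noncomputable def forcedIdeal (m : ℕ) : Ideal (MvPolynomial ℕ ℚ) :=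
  Ideal.span (Set.range fun i : Fin (m - 1) => X ((i : ℕ) + 3) - forcedCoeff ((i : ℕ) + 3))

theorem cubeIdeal_le_forcedIdeal (m : ℕ) : cubeIdeal m ≤ forcedIdeal m := by
  refine Ideal.span_le.mpr ?_
  rintro _ ⟨i, rfl⟩
  have h := sub_aeval_mem_span_of_mem_supported forcedCoeff (coeff_genC_pow_three_mem_supported i)
  rw [aeval_forcedCoeff_coeff_genC_pow_three, sub_zero] at h
  refine span_X_sub_forcedCoeff_Icc_le (fun n hn3 hn => Ideal.subset_span ?_) h
  exact ⟨⟨n - 3, by omega⟩, by simp only [Nat.sub_add_cancel hn3]⟩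

theorem X_sub_forcedCoeff_mem_cubeIdeal (m : ℕ) :
    ∀ k < m - 1, X (k + 3) - forcedCoeff (k + 3) ∈ cubeIdeal m := by
  intro k
  induction k using Nat.strong_induction_on with
  | _ k ih =>
    intro hk
    have hlower : cubeLower genTail k - aeval forcedCoeff (cubeLower genTail k) ∈ cubeIdeal m := by
      refine span_X_sub_forcedCoeff_Icc_le (fun n hn3 hn => ?_)
        (sub_aeval_mem_span_of_mem_supported forcedCoeff
          (cubeLower_mem _ fun j hj => coeff_genTail_mem_supported hj))
      simpa only [Nat.sub_add_cancel hn3] using ih (n - 3) (by omega) (by omega)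
    have hE : (genC ^ 3).coeff ((k : ℤ) + 1) ∈ cubeIdeal m := Ideal.subset_span ⟨⟨k, hk⟩, rfl⟩
    have h3 : (3 : ℚ) • (X (k + 3) - forcedCoeff (k + 3)) ∈ cubeIdeal m := by
      convert sub_mem hE hlower using 1
      rw [coeff_genC_pow_three, aeval_forcedCoeff_cubeLower_genTail, smul_eq_C_mul, map_ofNat]
      ring
    simpa using Submodule.smul_of_tower_mem _ (3⁻¹ : ℚ) h3

theorem cubeIdeal_eq_forcedIdeal (m : ℕ) : cubeIdeal m = forcedIdeal m := by
  refine le_antisymm (cubeIdeal_le_forcedIdeal m) (Ideal.span_le.mpr ?_)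
  rintro _ ⟨i, rfl⟩
  exact X_sub_forcedCoeff_mem_cubeIdeal m i i.isLt

theorem stmt6_general (m : ℕ) :
    ∃! R : Fin (m - 1) → MvPolynomial ℕ ℚ,
      (∀ i, R i ∈ MvPolynomial.supported ℚ ({1, 2} : Set ℕ)) ∧
      (∀ i, MvPolynomial.IsWeightedHomogeneous (fun j : ℕ => j + 1) (R i) ((i : ℕ) + 4)) ∧
      Ideal.span (Set.range fun i : Fin (m - 1) =>
          (genC ^ 3).coeff (((i : ℕ) : ℤ) + 1)) =
        Ideal.span (Set.range fun i : Fin (m - 1) =>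
          MvPolynomial.X ((i : ℕ) + 3) + R i) := by
  have hspan : cubeIdeal m = Ideal.span (Set.range fun i : Fin (m - 1) =>
      X ((i : ℕ) + 3) + -forcedCoeff ((i : ℕ) + 3)) := by
    simp only [cubeIdeal_eq_forcedIdeal, forcedIdeal, sub_eq_add_neg]
  have hforced : ∀ i : Fin (m - 1), -forcedCoeff ((i : ℕ) + 3) ∈ supported ℚ ({1, 2} : Set ℕ) :=
    fun i => neg_mem (forcedCoeff_mem_supported _)
  refine ⟨fun i => -forcedCoeff ((i : ℕ) + 3),
    ⟨hforced, fun i => (isWeightedHomogeneous_forcedCoeff _).neg, hspan⟩, ?_⟩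
  rintro R ⟨hR, -, hRspan⟩
  refine eq_of_span_range_X_add_eq_span (e := fun i : Fin (m - 1) => (i : ℕ) + 3)
    (fun i j hij => Fin.ext (by simpa using hij)) (fun i => ?_) hR hforced (hRspan.symm.trans hspan)
  simp

/-- for `m > 3` with `3 ∤ m`, there exist unique polynomials
`Rₖ ∈ ℚ[C₋₁, C₋₂]` (`k = 1, …, m-1`, indexed here by `i = k - 1 : Fin (m-1)`),
homogeneous of weight `k + 3` for the weights `w(C₋₁) = 2`, `w(C₋₂) = 3`
(i.e. `w(C₋ᵢ) = i+1`), such that the polynomials `Ẽₖ = C₋₍ₖ₊₂₎ + Rₖ(C₋₁, C₋₂)`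
generate the same ideal `I_{m-1} = ⟨E₁, …, E_{m-1}⟩`, where `Eₖ = (C³)₋ₖ`. -/
theorem stmt6 (m : ℕ) (hm : 3 < m) (hm3 : ¬ (3 ∣ m)) :
    ∃! R : Fin (m - 1) → MvPolynomial ℕ ℚ,
      (∀ i, R i ∈ MvPolynomial.supported ℚ ({1, 2} : Set ℕ)) ∧
      (∀ i, MvPolynomial.IsWeightedHomogeneous (fun j : ℕ => j + 1) (R i) ((i : ℕ) + 4)) ∧
      Ideal.span (Set.range fun i : Fin (m - 1) =>
          (genC ^ 3).coeff (((i : ℕ) : ℤ) + 1)) =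
        Ideal.span (Set.range fun i : Fin (m - 1) =>
          MvPolynomial.X ((i : ℕ) + 3) + R i) :=
  stmt6_general m
end

section
/- Let I ⊆ Q[C_{-1},...,C_{-7}] be the ideal generated by E_1,...,E_5 where E_k = (C^3)_{-k}. Then the polynomials C_{-3} + C_{-1}^2, C_{-4} + 2C_{-1}C_{-2}, C_{-5} + C_{-2}^2 - (5/3)C_{-1}^3, C_{-6} - 5C_{-1}^2C_{-2}, and C_{-7} + (10/3)C_{-1}^4 - 5C_{-1}C_{-2}^2 generate the same ideal I. -/
/-!
Factor `C = x · (1 + C₋₁x⁻² + C₋₂x⁻³ + ⋯)`: then `Eₖ` is the coefficient of `x^{-(k+3)}` in the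
cube of a power series in `x⁻¹` and can be computed by hand. The vector `(E₁, …, E₅)` turns out
to be `M · (G₁, …, G₅)`, where `G₁, …, G₅` are the new generators and `M` is lower triangular
with every diagonal entry equal to `3`. So `M` is invertible over `ℚ`, and a change of generators
by an invertible matrix does not change the ideal they span.
-/

open MvPolynomial

open scoped Matrix

theorem Ideal.span_range_mulVec_le {R m n : Type*} [Semiring R] [Fintype n] (M : Matrix m n R)
    (v : n → R) : Ideal.span (Set.range (M *ᵥ v)) ≤ Ideal.span (Set.range v) := by
  rw [Ideal.span_le]
  rintro _ ⟨i, rfl⟩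
  exact Ideal.sum_mem _ fun j _ => Ideal.mul_mem_left _ _ (Ideal.subset_span ⟨j, rfl⟩)

theorem Ideal.span_range_mulVec_of_isUnit_det {R n : Type*} [CommRing R] [Fintype n]
    [DecidableEq n] {M : Matrix n n R} (hM : IsUnit M.det) (v : n → R) :
    Ideal.span (Set.range (M *ᵥ v)) = Ideal.span (Set.range v) :=
  (span_range_mulVec_le M v).antisymm <| by
    simpa [Matrix.mulVec_mulVec, Matrix.nonsing_inv_mul _ hM] using
      span_range_mulVec_le M⁻¹ (M *ᵥ v)

/-- `C / x = 1 + C₋₁u² + C₋₂u³ + ⋯` as a power series in `u = x⁻¹`. -/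
noncomputable def normalizedC : PowerSeries (MvPolynomial ℕ ℚ) :=
  PowerSeries.mk fun i => if i = 0 then 1 else if i = 1 then 0 else X (i - 1)

theorem genC_eq_single_mul :
    genC = HahnSeries.single (-1 : ℤ) 1 * HahnSeries.ofPowerSeries ℤ _ normalizedC := by
  have h : normalizedC =
      1 + PowerSeries.X * PowerSeries.mk fun i => if i = 0 then 0 else X i := by
    ext (_ | _ | n) <;> simp [normalizedC, PowerSeries.coeff_succ_X_mul]
  rw [h, map_add, RingHom.map_one, map_mul, HahnSeries.ofPowerSeries_X, mul_add, mul_one,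
    ← mul_assoc, HahnSeries.single_mul_single, one_mul, neg_add_cancel,
    HahnSeries.single_zero_one, one_mul]
  rfl

theorem coeff_genC_pow_three_s8 {k : ℤ} (hk : -3 ≤ k) :
    (genC ^ 3).coeff k = PowerSeries.coeff (k + 3).toNat (normalizedC ^ 3) := by
  obtain ⟨n, rfl⟩ : ∃ n : ℕ, k = n + (-3) := ⟨(k + 3).toNat, by omega⟩
  rw [genC_eq_single_mul, mul_pow, HahnSeries.single_pow, ← map_pow, one_pow,
    show 3 • (-1 : ℤ) = -3 by rfl, HahnSeries.coeff_single_mul_add, one_mul,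
    HahnSeries.ofPowerSeries_apply_coeff]
  congr
  omega

theorem coeff_genC_pow_three_eq :
    ![(genC ^ 3).coeff 1, (genC ^ 3).coeff 2, (genC ^ 3).coeff 3, (genC ^ 3).coeff 4,
        (genC ^ 3).coeff 5] =
      ![3 * X 3 + 3 * X 1 ^ 2,
        3 * X 4 + 6 * X 1 * X 2,
        3 * X 5 + 6 * X 1 * X 3 + 3 * X 2 ^ 2 + X 1 ^ 3,
        3 * X 6 + 6 * X 1 * X 4 + 6 * X 2 * X 3 + 3 * X 1 ^ 2 * X 2,
        3 * X 7 + 6 * X 1 * X 5 + 6 * X 2 * X 4 + 3 * X 3 ^ 2 + 3 * X 1 ^ 2 * X 3 +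
          3 * X 1 * X 2 ^ 2] := by
  funext i
  fin_cases i <;>
  · simp only [Fin.zero_eta, Fin.mk_one, Fin.reduceFinMk, Matrix.cons_val]
    rw [coeff_genC_pow_three_s8 (by norm_num)]
    simp only [Int.reduceAdd, Int.reduceToNat, pow_three, PowerSeries.coeff_mul,
      Finset.Nat.sum_antidiagonal_eq_sum_range_succ_mk, Finset.sum_range_succ, normalizedC,
      PowerSeries.coeff_mk]
    norm_num
    ring

noncomputable def transitionMatrix : Matrix (Fin 5) (Fin 5) (MvPolynomial ℕ ℚ) :=
  !![3, 0, 0, 0, 0;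
     0, 3, 0, 0, 0;
     6 * X 1, 0, 3, 0, 0;
     6 * X 2, 6 * X 1, 0, 3, 0;
     3 * X 3, 6 * X 2, 6 * X 1, 0, 3]

theorem transitionMatrix_isLowerTriangular : transitionMatrix.IsLowerTriangular := by
  intro i j (hij : i < j)
  fin_cases i <;> fin_cases j <;> simp [transitionMatrix] at hij ⊢

theorem isUnit_det_transitionMatrix : IsUnit transitionMatrix.det := by
  rw [Matrix.det_of_isLowerTriangular _ transitionMatrix_isLowerTriangular, Fin.prod_univ_five]
  have h3 : IsUnit (3 : MvPolynomial ℕ ℚ) := by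
    rw [← map_ofNat C 3]
    exact (isUnit_iff_ne_zero.2 three_ne_zero).map C
  simpa [transitionMatrix] using h3

theorem coeff_genC_pow_three_eq_mulVec :
    ![(genC ^ 3).coeff 1, (genC ^ 3).coeff 2, (genC ^ 3).coeff 3, (genC ^ 3).coeff 4,
        (genC ^ 3).coeff 5] =
      transitionMatrix *ᵥ ![X 3 + X 1 ^ 2,
        X 4 + 2 * X 1 * X 2,
        X 5 + X 2 ^ 2 - C (5 / 3 : ℚ) * X 1 ^ 3,
        X 6 - 5 * X 1 ^ 2 * X 2,
        X 7 + C (10 / 3 : ℚ) * X 1 ^ 4 - 5 * X 1 * X 2 ^ 2] := by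
  have h5 : (3 : MvPolynomial ℕ ℚ) * C (5 / 3) = 5 := by
    rw [← map_ofNat C 3, ← C_mul, ← map_ofNat C 5]; norm_num
  have h10 : (3 : MvPolynomial ℕ ℚ) * C (10 / 3) = 10 := by
    rw [← map_ofNat C 3, ← C_mul, ← map_ofNat C 10]; norm_num
  rw [coeff_genC_pow_three_eq]
  funext i
  fin_cases i <;> simp only [Fin.reduceFinMk, Fin.zero_eta, Fin.mk_one,
    Matrix.cons_val, Matrix.cons_val_zero, Matrix.cons_val_one, Matrix.mulVec, dotProduct,
    transitionMatrix, Matrix.of_apply, Matrix.cons_val', Matrix.cons_val_fin_one,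
    Fin.sum_univ_five, zero_mul, zero_add, add_zero]
  · ring
  · ring
  · linear_combination X 1 ^ 3 * h5
  · ring
  · linear_combination 2 * X 1 ^ 4 * h5 - X 1 ^ 4 * h10

/-- the ideal `I = ⟨E₁, …, E₅⟩` with `Eₖ = (C³)₋ₖ` coincides with the
ideal generated by `C₋₃ + C₋₁²`, `C₋₄ + 2C₋₁C₋₂`, `C₋₅ + C₋₂² - (5/3)C₋₁³`,
`C₋₆ - 5C₋₁²C₋₂` and `C₋₇ + (10/3)C₋₁⁴ - 5C₋₁C₋₂²`. -/
theorem stmt8 :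
    Ideal.span ({(genC ^ 3).coeff 1, (genC ^ 3).coeff 2, (genC ^ 3).coeff 3,
        (genC ^ 3).coeff 4, (genC ^ 3).coeff 5} : Set (MvPolynomial ℕ ℚ)) =
      Ideal.span ({X 3 + X 1 ^ 2,
        X 4 + 2 * X 1 * X 2,
        X 5 + X 2 ^ 2 - MvPolynomial.C (5 / 3 : ℚ) * X 1 ^ 3,
        X 6 - 5 * X 1 ^ 2 * X 2,
        X 7 + MvPolynomial.C (10 / 3 : ℚ) * X 1 ^ 4 - 5 * X 1 * X 2 ^ 2} :
          Set (MvPolynomial ℕ ℚ)) := by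
  have h := Ideal.span_range_mulVec_of_isUnit_det isUnit_det_transitionMatrix
    ![X 3 + X 1 ^ 2,
      X 4 + 2 * X 1 * X 2,
      X 5 + X 2 ^ 2 - C (5 / 3 : ℚ) * X 1 ^ 3,
      X 6 - 5 * X 1 ^ 2 * X 2,
      X 7 + C (10 / 3 : ℚ) * X 1 ^ 4 - 5 * X 1 * X 2 ^ 2]
  rw [← coeff_genC_pow_three_eq_mulVec] at h
  simpa only [Matrix.range_cons, Matrix.range_empty, Set.union_empty, Set.singleton_union]
    using h
end

section
/- Let K be a field of characteristic zero and suppose C = x + ∑_{i≥1} C_{-i}x^{-i} ∈ K((x^{-1})) satisfies C^3 ∈ K[x] and C_{-2} = 0. Then C^3 = x^3 + 3C_{-1}x. -/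
/-!
Write `C = x + c x⁻¹ + E` with `c = C₋₁`; since `C₀ = C₋₂ = 0`, `E` involves only `x⁻³` and
lower powers. With `D = c x⁻¹ + E`, expanding `(x + D)³` gives
`C³ = x³ + 3c x + (3x²E + D²(3x + D))`, and the remainder only involves `x⁻¹` and lower powers.
Since `C³` and `x³ + 3c x` are polynomials, the remainder is a polynomial too, hence zero.
-/

namespace HahnSeries

variable {Γ R : Type*}

theorem coe_add_le_orderTop_mul [AddCommMonoid Γ] [LinearOrder Γ] [IsOrderedCancelAddMonoid Γ]
    [NonUnitalNonAssocSemiring R] {x y : R⟦Γ⟧} {a b : Γ}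
    (ha : (a : WithTop Γ) ≤ x.orderTop) (hb : (b : WithTop Γ) ≤ y.orderTop) :
    ((a + b : Γ) : WithTop Γ) ≤ (x * y).orderTop :=
  WithTop.coe_add a b ▸ (add_le_add ha hb).trans orderTop_add_le_mul

theorem le_orderTop_add [LinearOrder Γ] [AddMonoid R] {x y : R⟦Γ⟧} {a : WithTop Γ}
    (hx : a ≤ x.orderTop) (hy : a ≤ y.orderTop) : a ≤ (x + y).orderTop :=
  (le_min hx hy).trans min_orderTop_le_orderTop_add

theorem eq_zero_of_le_orderTop_of_coeff_eq_zero [LinearOrder Γ] [Zero R] {x : R⟦Γ⟧} {a : Γ}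
    (hx : (a : WithTop Γ) ≤ x.orderTop) (hcoeff : ∀ n, a ≤ n → x.coeff n = 0) : x = 0 := by
  ext n
  rcases lt_or_ge n a with hn | hn
  · exact le_orderTop_iff_forall.mp hx n (WithTop.coe_lt_coe.mpr hn)
  · exact hcoeff n hn

end HahnSeries

open HahnSeries

section Cube

variable {R : Type*} [CommRing R] (c : R) (E : R⟦ℤ⟧)

theorem cube_single_neg_one_add :
    (single (-1) 1 + (single 1 c + E)) ^ 3 = single (-3) 1 + single (-1) (3 * c) +
      (single (-2) 3 * E + (single 1 c + E) ^ 2 * (single (-1) 3 + (single 1 c + E))) := by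
  have h3 : ∀ (a : ℤ) (r : R), single a (3 * r) = 3 * single a r := fun a r => by
    rw [← single_zero_ofNat, single_mul_single, zero_add]
  set X : R⟦ℤ⟧ := single (-1) 1
  have hX3 : single (-3) (1 : R) = X ^ 3 := by simp [X]
  have hXc : single (-1) (3 * c) = 3 * X ^ 2 * single 1 c := by simp [X, h3, mul_assoc]
  have hX2 : single (-2) (3 : R) = 3 * X ^ 2 := by simpa [X] using h3 (-2) 1
  have hX1 : single (-1) (3 : R) = 3 * X := by simpa [X] using h3 (-1) 1
  rw [hX3, hXc, hX2, hX1]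
  ring

theorem one_le_orderTop_cube_remainder (hE : ((3 : ℤ) : WithTop ℤ) ≤ E.orderTop) :
    ((1 : ℤ) : WithTop ℤ) ≤
      (single (-2) 3 * E + (single 1 c + E) ^ 2 * (single (-1) 3 + (single 1 c + E))).orderTop := by
  have hD : ((1 : ℤ) : WithTop ℤ) ≤ (single 1 c + E).orderTop :=
    le_orderTop_add orderTop_single_le (le_trans (by norm_cast) hE)
  refine le_orderTop_add (coe_add_le_orderTop_mul (a := -2) orderTop_single_le hE) ?_
  refine coe_add_le_orderTop_mul (a := 2) (b := -1)
    (pow_two (single 1 c + E) ▸ coe_add_le_orderTop_mul hD hD) ?_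
  exact le_orderTop_add orderTop_single_le (le_trans (by norm_cast) hD)

end Cube

theorem stmt10_general (K : Type*) [Field K]
    (C : LaurentSeries K)
    (hx : C.coeff (-1) = 1) (h0 : C.coeff 0 = 0)
    (hlow : ∀ n : ℤ, n < -1 → C.coeff n = 0)
    (hpoly : ∀ n : ℤ, 0 < n → (C ^ 3).coeff n = 0)
    (hc2 : C.coeff 2 = 0) :
    C ^ 3 = HahnSeries.single (-3 : ℤ) 1 + HahnSeries.single (-1 : ℤ) (3 * C.coeff 1) := by
  set c := C.coeff 1
  set E := C - single (-1) 1 - single 1 c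
  have hE : ((3 : ℤ) : WithTop ℤ) ≤ E.orderTop := by
    refine le_orderTop_iff_forall.mpr fun j hj => ?_
    have hj : j < 3 := WithTop.coe_lt_coe.mp hj
    simp only [E, coeff_sub, coeff_single]
    obtain hj | rfl | rfl | rfl | rfl : j < -1 ∨ j = -1 ∨ j = 0 ∨ j = 1 ∨ j = 2 := by omega
    · simp [hlow j hj, hj.ne, show j ≠ 1 by omega]
    all_goals simp [*, c]
  have hexp := cube_single_neg_one_add c E
  rw [show single (-1) 1 + (single 1 c + E) = C by simp only [E]; abel] at hexp
  set R := single (-2) 3 * E + (single 1 c + E) ^ 2 * (single (-1) 3 + (single 1 c + E))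
  have hR0 : R = 0 := by
    refine eq_zero_of_le_orderTop_of_coeff_eq_zero (one_le_orderTop_cube_remainder c E hE)
      fun n hn => ?_
    have hcoeff := congrArg (coeff · n) hexp
    simp [hpoly n hn, show n ≠ -3 by omega, show n ≠ -1 by omega] at hcoeff
    exact hcoeff.symm
  rw [hexp, hR0, add_zero]

/-- if `C = x + ∑_{i≥1} C₋ᵢx⁻ⁱ ∈ K((x⁻¹))`, `K` of characteristic zero,
satisfies `C³ ∈ K[x]` and `C₋₂ = 0`, then `C³ = x³ + 3C₋₁x`.
(`C.coeff n` is the coefficient of `x⁻ⁿ`; `x³ = HahnSeries.single (-3) 1` and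
`x = HahnSeries.single (-1) 1`.) -/
theorem stmt10 (K : Type*) [Field K] [CharZero K]
    (C : LaurentSeries K)
    (hx : C.coeff (-1) = 1) (h0 : C.coeff 0 = 0)
    (hlow : ∀ n : ℤ, n < -1 → C.coeff n = 0)
    (hpoly : ∀ n : ℤ, 0 < n → (C ^ 3).coeff n = 0)
    (hc2 : C.coeff 2 = 0) :
    C ^ 3 = HahnSeries.single (-3 : ℤ) 1 + HahnSeries.single (-1 : ℤ) (3 * C.coeff 1) :=
  stmt10_general K C hx h0 hlow hpoly hc2
end

section
/- Let C = x + ∑_{i≥1} C_{-i} x^{-i} ∈ D((x^{-1})) for a commutative Q-algebra D, and suppose (C^3)_{-k} = 0 for all k = 1, ..., m-1. Then each coefficient C_{-k} for 3 ≤ k ≤ m+1 is determined by C_{-1} and C_{-2}: there exist universal polynomials R_{k-2} ∈ Q[u,v] (independent of D and C) such that C_{-k} = -R_{k-2}(C_{-1}, C_{-2}). -/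
/-!
Write `C = x·g` with `g = 1 + C₋₁x⁻² + C₋₂x⁻³ + ⋯` a power series in `x⁻¹` with constant term `1`.
If two such series agree below degree `n`, their cubes differ in degree `n` by exactly three times
the difference of their degree-`n` coefficients (`g³ - g'³ = (g - g')(g² + gg' + g'²)`). Hence the
vanishing of `(C³)₋ₖ` determines the coefficient of `x⁻ᵏ⁻³` in `g` from the lower ones, and
running the same recursion over `ℚ[u, v]` produces the generic cube root of
`1 + 3u x⁻² + 3v x⁻³`, whose coefficients are the universal polynomials.
-/

open PowerSeries

theorem PowerSeries.coeff_pow_three_sub_coeff_pow_three {R : Type*} [CommRing R]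
    {g g' : R⟦X⟧} {n : ℕ} (hn : 0 < n) (hg : constantCoeff g = 1)
    (hgg' : ∀ i < n, coeff i g = coeff i g') :
    coeff n (g ^ 3) - coeff n (g' ^ 3) = 3 * (coeff n g - coeff n g') := by
  have hg' : constantCoeff g' = 1 := by
    rw [← coeff_zero_eq_constantCoeff_apply, ← hgg' 0 hn, coeff_zero_eq_constantCoeff_apply, hg]
  obtain ⟨h, hh⟩ : X ^ n ∣ g - g' :=
    X_pow_dvd_iff.mpr fun i hi => by rw [map_sub, hgg' i hi, sub_self]
  have hcube : g ^ 3 - g' ^ 3 = X ^ n * (h * (g ^ 2 + g * g' + g' ^ 2)) := by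
    rw [← mul_assoc, ← hh]; ring
  rw [← map_sub, ← map_sub, hcube, hh]
  simp [coeff_X_pow_mul', hg, hg']
  ring

theorem LaurentSeries.coeff_pow_of_coeff_eq_zero {R : Type*} [CommSemiring R]
    (x : LaurentSeries R) (a : ℤ) (hx : ∀ n < a, x.coeff n = 0) (k n : ℕ) :
    (x ^ k).coeff (k * a + n) = coeff n ((mk fun i : ℕ => x.coeff (a + i)) ^ k) := by
  have hdecomp : x = HahnSeries.single a 1 *
      ((mk fun i : ℕ => x.coeff (a + i) : R⟦X⟧) : LaurentSeries R) := by
    ext i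
    rw [show i = (i - a) + a by ring, HahnSeries.coeff_single_mul_add, one_mul, coeff_coe]
    split_ifs with h
    · exact hx _ (by omega)
    · simp only [coeff_mk]
      congr 1
      omega
  conv_lhs => rw [hdecomp]
  rw [mul_pow, HahnSeries.single_pow, one_pow, ← map_pow, add_comm, nsmul_eq_mul,
    HahnSeries.coeff_single_mul_add, one_mul, coeff_coe_powerSeries]

noncomputable def cubeRootCoeff : ℕ → MvPolynomial (Fin 2) ℚ
  | 0 => 1
  | 1 => 0
  | 2 => MvPolynomial.X 0
  | 3 => MvPolynomial.X 1
  | n + 4 => -(3⁻¹ : ℚ) •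
      PowerSeries.coeff (n + 4) ((mk fun i => if _ : i < n + 4 then cubeRootCoeff i else 0) ^ 3)

theorem coeff_mk_cubeRootCoeff_pow_three {n : ℕ} (hn : 4 ≤ n) :
    coeff n ((mk cubeRootCoeff) ^ 3) = 0 := by
  obtain ⟨k, rfl⟩ : ∃ k, n = k + 4 := ⟨n - 4, by omega⟩
  set lower := mk fun i => if _ : i < k + 4 then cubeRootCoeff i else 0
  have hdiff := coeff_pow_three_sub_coeff_pow_three (g := mk cubeRootCoeff) (g' := lower)
    (n := k + 4) (by omega) (by simp [cubeRootCoeff]) (fun i hi => by simp [lower, hi])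
  have hstep : coeff (k + 4) (mk cubeRootCoeff) = -(3⁻¹ : ℚ) • coeff (k + 4) (lower ^ 3) := by
    rw [coeff_mk, cubeRootCoeff]
  rw [hstep, show coeff (k + 4) lower = 0 by simp [lower], sub_zero, sub_eq_iff_eq_add] at hdiff
  rw [hdiff, Algebra.smul_def, ← mul_assoc, ← map_ofNat (algebraMap ℚ _) 3, ← map_mul]
  norm_num

theorem coeff_eq_aeval_cubeRootCoeff {D : Type*} [CommRing D] [Algebra ℚ D] {g : D⟦X⟧} {N : ℕ}
    (h0 : constantCoeff g = 1) (h1 : coeff 1 g = 0)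
    (hcube : ∀ n, 4 ≤ n → n ≤ N → coeff n (g ^ 3) = 0) :
    ∀ n ≤ N, coeff n g = MvPolynomial.aeval ![coeff 2 g, coeff 3 g] (cubeRootCoeff n) := by
  set φ := MvPolynomial.aeval (R := ℚ) ![coeff 2 g, coeff 3 g]
  have h3 : IsUnit (3 : D) := by
    simpa only [map_ofNat] using (IsUnit.mk0 (3 : ℚ) three_ne_zero).map (algebraMap ℚ D)
  intro n
  induction n using Nat.strong_induction_on with
  | _ n ih =>
    intro hn
    match n, hn with
    | 0, _ => simpa [cubeRootCoeff] using h0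
    | 1, _ => simpa [cubeRootCoeff] using h1
    | 2, _ => simp [cubeRootCoeff, φ]
    | 3, _ => simp [cubeRootCoeff, φ]
    | n + 4, hn =>
      have hdiff := coeff_pow_three_sub_coeff_pow_three (g := g)
        (g' := map φ.toRingHom (mk cubeRootCoeff)) (n := n + 4) (by omega) h0
        (fun i hi => by simpa using ih i hi (by omega))
      rw [hcube _ (by omega) hn, ← map_pow, coeff_map, coeff_mk_cubeRootCoeff_pow_three (by omega),
        map_zero, sub_zero, eq_comm, h3.mul_right_eq_zero, sub_eq_zero] at hdiff
      simpa using hdiff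

theorem stmt17_general (m : ℕ) :
    ∃ R : ℕ → MvPolynomial (Fin 2) ℚ,
      ∀ (D : Type) (_ : CommRing D) (_ : Algebra ℚ D),
        ∀ C : LaurentSeries D,
          C.coeff (-1) = 1 → C.coeff 0 = 0 → (∀ n : ℤ, n < -1 → C.coeff n = 0) →
          (∀ k : ℕ, 1 ≤ k → k ≤ m - 1 → (C ^ 3).coeff (k : ℤ) = 0) →
          ∀ k : ℕ, 3 ≤ k → k ≤ m + 1 →
            C.coeff (k : ℤ) =
              - MvPolynomial.aeval ![C.coeff 1, C.coeff 2] (R (k - 2)) := by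
  refine ⟨fun j => -cubeRootCoeff (j + 3), ?_⟩
  intro D _ _ C h1 h0 hneg hvan k hk3 hkm
  -- `g = x⁻¹ C`, as a power series in `x⁻¹`
  set g : D⟦X⟧ := mk fun i : ℕ => C.coeff (-1 + i)
  have hcube : ∀ n, 4 ≤ n → n ≤ m + 2 → coeff n (g ^ 3) = 0 := fun n hn4 hnm => by
    rw [← LaurentSeries.coeff_pow_of_coeff_eq_zero C (-1) hneg 3 n,
      ← hvan (n - 3) (by omega) (by omega)]
    congr 1
    omega
  have hk := coeff_eq_aeval_cubeRootCoeff (by simpa [g] using h1) (by simpa [g] using h0) hcube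
    (k + 1) (by omega)
  rw [map_neg, neg_neg, show k - 2 + 3 = k + 1 by omega]
  norm_num [g] at hk
  simpa only [add_comm 1 k] using hk

/-- let `m > 3`.  There exist universal polynomials
`R₁, …, R_{m-1} ∈ ℚ[u,v]` (independent of `D` and `C`; here `R : ℕ → _` and only
the values `R 1, …, R (m-1)` are used) such that for every commutative `ℚ`-algebra
`D` and every `C = x + ∑_{i≥1} C₋ᵢx⁻ⁱ ∈ D((x⁻¹))` with `(C³)₋ₖ = 0` for
`k = 1, …, m-1`, one has `C₋ₖ = -R_{k-2}(C₋₁, C₋₂)` for all `3 ≤ k ≤ m+1`. -/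
theorem stmt17 (m : ℕ) (hm : 3 < m) :
    ∃ R : ℕ → MvPolynomial (Fin 2) ℚ,
      ∀ (D : Type) (_ : CommRing D) (_ : Algebra ℚ D),
        ∀ C : LaurentSeries D,
          C.coeff (-1) = 1 → C.coeff 0 = 0 → (∀ n : ℤ, n < -1 → C.coeff n = 0) →
          (∀ k : ℕ, 1 ≤ k → k ≤ m - 1 → (C ^ 3).coeff (k : ℤ) = 0) →
          ∀ k : ℕ, 3 ≤ k → k ≤ m + 1 →
            C.coeff (k : ℤ) =
              - MvPolynomial.aeval ![C.coeff 1, C.coeff 2] (R (k - 2)) :=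
  stmt17_general m
end
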